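/- Let h_1, …, h_n be real numbers, not all equal, with min_i h_i < 0 < max_i h_i. Then the supremum of Π_{i=1}^n p_i over probability vectors (p_i ≥ 0, Σ p_i = 1) subject to Σ_i p_i h_i = 0 is attained, and at the maximizer p_i = (1/n)·1/(1 + λ h_i) for a Lagrange multiplier λ ∈ ℝ satisfying Σ_{i=1}^n h_i/(1 + λ h_i) = 0. -/

import Mathlib

/-!
The Lagrange multiplier is a zero of `g λ = ∑ hᵢ / (1 + λ hᵢ)` on the interval where all
`1 + λ hᵢ > 0`. Near each end of that interval one term blows up (to `+∞` as
`λ max h → -1`, to `-∞` as `λ min h → -1`) while the others stay bounded, so the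
intermediate value theorem gives a zero `λ`. For `pᵢ = 1 / (n (1 + λ hᵢ))` and any
feasible `q`, the ratios `qᵢ / pᵢ` sum to `n` by the two constraints on `q`, so AM-GM gives
`∏ qᵢ ≤ ∏ pᵢ`.
-/

open Finset

variable {ι : Type*} [Fintype ι]

theorem prod_le_one_of_sum_eq_card {x : ι → ℝ} (hx : ∀ i, 0 ≤ x i)
    (hsum : ∑ i, x i = Fintype.card ι) : ∏ i, x i ≤ 1 := by
  cases isEmpty_or_nonempty ι
  · simp
  have hcard : (0 : ℝ) < Fintype.card ι := by exact_mod_cast Fintype.card_pos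
  have amgm := Real.geom_mean_le_arith_mean univ (fun _ => 1) x (fun _ _ => zero_le_one)
    (by simpa using hcard) (fun i _ => hx i)
  simp only [Real.rpow_one, one_mul, sum_const, card_univ, nsmul_eq_mul, mul_one, hsum,
    div_self hcard.ne'] at amgm
  rwa [Real.rpow_inv_le_iff_of_pos (prod_nonneg fun i _ => hx i) zero_le_one hcard,
    Real.one_rpow] at amgm

theorem neg_abs_le_div_one_add_mul {lam x : ℝ} (hlam : lam ≤ 0) (hden : 0 < 1 + lam * x) :
    -|x| ≤ x / (1 + lam * x) := by
  rcases le_or_gt 0 x with hx | hx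
  · exact (neg_nonpos.mpr (abs_nonneg x)).trans (div_nonneg hx hden.le)
  · rw [abs_of_neg hx, neg_neg, le_div_iff₀ hden]
    nlinarith [mul_nonpos_of_nonpos_of_nonneg hlam (sq_nonneg x)]

theorem exists_nonpos_sum_div_one_add_mul_pos {h : ι → ℝ} (hpos : ∃ i, 0 < h i) :
    ∃ lam ≤ 0, (∀ i, 0 < 1 + lam * h i) ∧ 0 < ∑ i, h i / (1 + lam * h i) := by
  obtain ⟨i₀, -, hmax⟩ := exists_max_image univ h ⟨hpos.choose, mem_univ _⟩
  set M := h i₀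
  set B := ∑ i, |h i|
  have hM : 0 < M := hpos.choose_spec.trans_le (hmax _ (mem_univ _))
  have hMB : M ≤ B :=
    (le_abs_self M).trans (single_le_sum (fun i _ => abs_nonneg (h i)) (mem_univ i₀))
  have hB : 0 < B := hM.trans_le hMB
  -- `λ` is chosen so that `1 + λ M = M / B`, making the `i₀` term equal to `B`.
  set lam := 1 / B - 1 / M
  have hlam : lam ≤ 0 := sub_nonpos.mpr (one_div_le_one_div_of_le hM hMB)
  have hden₀ : 1 + lam * M = M / B := by simp only [lam]; field_simp; ring
  have hden : ∀ i, 0 < 1 + lam * h i := fun i =>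
    calc 0 < M / B := div_pos hM hB
      _ = 1 + lam * M := hden₀.symm
      _ ≤ 1 + lam * h i := by
        gcongr 1 + ?_
        exact mul_le_mul_of_nonpos_left (hmax i (mem_univ i)) hlam
  refine ⟨lam, hlam, hden, ?_⟩
  have hterm : ∀ i, 0 ≤ h i / (1 + lam * h i) + |h i| := fun i => by
    linarith [neg_abs_le_div_one_add_mul hlam (hden i)]
  calc 0 < M / (M / B) + |M| - B := by rw [div_div_cancel₀ hM.ne', abs_of_pos hM]; linarith
    _ ≤ ∑ i, (h i / (1 + lam * h i) + |h i|) - B := by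
        rw [← hden₀]
        gcongr
        exact single_le_sum (fun i _ => hterm i) (mem_univ i₀)
    _ = ∑ i, h i / (1 + lam * h i) := by rw [sum_add_distrib]; ring

theorem exists_sum_div_one_add_mul_eq_zero {h : ι → ℝ} (hneg : ∃ i, h i < 0)
    (hpos : ∃ i, 0 < h i) :
    ∃ lam, (∀ i, 0 < 1 + lam * h i) ∧ ∑ i, h i / (1 + lam * h i) = 0 := by
  obtain ⟨a, ha, hdena, hga⟩ := exists_nonpos_sum_div_one_add_mul_pos hpos
  obtain ⟨b, hb, hdenb, hgb⟩ := exists_nonpos_sum_div_one_add_mul_pos (h := -h)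
    (hneg.imp fun _ => neg_pos.mpr)
  simp only [Pi.neg_apply, mul_neg, ← neg_mul, neg_div, sum_neg_distrib, neg_pos] at hdenb hgb
  have hab : a ≤ -b := ha.trans (neg_nonneg.mpr hb)
  have hden : ∀ x ∈ Set.Icc a (-b), ∀ i, 0 < 1 + x * h i := by
    rintro x ⟨hax, hxb⟩ i
    rcases le_or_gt 0 (h i) with hi | hi
    · nlinarith [hdena i]
    · nlinarith [hdenb i]
  have hcont : ContinuousOn (fun x => ∑ i, h i / (1 + x * h i)) (Set.Icc a (-b)) :=
    continuousOn_finsetSum _ fun i _ =>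
      continuousOn_const.div (by fun_prop) fun x hx => (hden x hx i).ne'
  obtain ⟨lam, hlam, hzero⟩ := intermediate_value_Icc' hab hcont ⟨hgb.le, hga.le⟩
  exact ⟨lam, hden lam hlam, hzero⟩

section Lagrange

variable {h : ι → ℝ} {lam : ℝ}

theorem sum_one_div_one_add_mul_eq_card (hden : ∀ i, 0 < 1 + lam * h i)
    (hzero : ∑ i, h i / (1 + lam * h i) = 0) :
    ∑ i, 1 / (1 + lam * h i) = Fintype.card ι := by
  have hsplit : ∀ i, 1 / (1 + lam * h i) = 1 - lam * (h i / (1 + lam * h i)) := fun i => by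
    field_simp [(hden i).ne']
    ring
  simp [hsplit, sum_sub_distrib, ← mul_sum, hzero]

theorem sum_lagrange_weights_eq_one [Nonempty ι] (hden : ∀ i, 0 < 1 + lam * h i)
    (hzero : ∑ i, h i / (1 + lam * h i) = 0) :
    ∑ i, 1 / (Fintype.card ι : ℝ) * (1 / (1 + lam * h i)) = 1 := by
  rw [← mul_sum, sum_one_div_one_add_mul_eq_card hden hzero, one_div_mul_cancel]
  exact_mod_cast Fintype.card_ne_zero

theorem sum_lagrange_weights_mul_eq_zero (hzero : ∑ i, h i / (1 + lam * h i) = 0) :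
    ∑ i, 1 / (Fintype.card ι : ℝ) * (1 / (1 + lam * h i)) * h i = 0 := by
  have hterm : ∀ i, 1 / (Fintype.card ι : ℝ) * (1 / (1 + lam * h i)) * h i =
      1 / (Fintype.card ι : ℝ) * (h i / (1 + lam * h i)) := fun i => by ring
  rw [sum_congr rfl fun i _ => hterm i, ← mul_sum, hzero, mul_zero]

theorem prod_le_prod_lagrange_weights (hden : ∀ i, 0 < 1 + lam * h i) {q : ι → ℝ}
    (hq : ∀ i, 0 ≤ q i) (hq1 : ∑ i, q i = 1) (hqh : ∑ i, q i * h i = 0) :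
    ∏ i, q i ≤ ∏ i, 1 / (Fintype.card ι : ℝ) * (1 / (1 + lam * h i)) := by
  set c : ℝ := (Fintype.card ι : ℝ)
  set p : ι → ℝ := fun i => 1 / c * (1 / (1 + lam * h i))
  obtain ⟨i₀, -⟩ := nonempty_of_sum_ne_zero (hq1 ▸ one_ne_zero : ∑ i, q i ≠ 0)
  have hc : 0 < c := Nat.cast_pos.mpr (Fintype.card_pos_iff.mpr ⟨i₀⟩)
  set r : ι → ℝ := fun i => q i * (c * (1 + lam * h i))
  have hr : ∀ i, 0 ≤ r i := fun i => mul_nonneg (hq i) (mul_nonneg hc.le (hden i).le)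
  have hrsum : ∑ i, r i = c :=
    calc ∑ i, r i = c * ∑ i, q i + c * lam * ∑ i, q i * h i := by
          simp only [r, mul_sum, ← sum_add_distrib]; congr 1; ext i; ring
      _ = c := by rw [hq1, hqh]; ring
  have hqpr : ∀ i, q i = p i * r i := fun i => by
    simp only [p, r]
    field_simp [(hden i).ne', hc.ne']
  calc ∏ i, q i = (∏ i, p i) * ∏ i, r i := by
        rw [← prod_mul_distrib]
        exact prod_congr rfl fun i _ => hqpr i
    _ ≤ (∏ i, p i) * 1 := by
        gcongr
        · exact prod_nonneg fun i _ => by positivity [hden i]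
        · exact prod_le_one_of_sum_eq_card hr hrsum
    _ = ∏ i, p i := mul_one _

end Lagrange

theorem empirical_likelihood_lagrange_general (n : ℕ) (h : Fin n → ℝ)
    (hneg : ∃ i, h i < 0) (hpos : ∃ i, 0 < h i) :
    ∃ p : Fin n → ℝ,
      (∀ i, 0 ≤ p i) ∧ (∑ i, p i = 1) ∧ (∑ i, p i * h i = 0) ∧
      (∀ q : Fin n → ℝ, (∀ i, 0 ≤ q i) → (∑ i, q i = 1) → (∑ i, q i * h i = 0) →
        ∏ i, q i ≤ ∏ i, p i) ∧
      ∃ lam : ℝ, (∀ i, p i = (1 / n) * (1 / (1 + lam * h i))) ∧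
        (∑ i, h i / (1 + lam * h i) = 0) := by
  obtain ⟨lam, hden, hzero⟩ := exists_sum_div_one_add_mul_eq_zero hneg hpos
  have : Nonempty (Fin n) := hpos.nonempty
  have hsum := sum_lagrange_weights_eq_one hden hzero
  have hmean := sum_lagrange_weights_mul_eq_zero (lam := lam) hzero
  have hmax := fun q => prod_le_prod_lagrange_weights (q := q) hden
  rw [Fintype.card_fin] at hsum hmean hmax
  exact ⟨_, fun i => by have := hden i; positivity, hsum, hmean, hmax, lam, fun _ => rfl, hzero⟩

/-- Empirical likelihood: if the `h i` are not all equal and `0` lies strictly between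
`min h` and `max h`, the constrained supremum of `∏ p i` is attained at a maximizer of
the Lagrange form `p i = (1/n) / (1 + λ h i)` with `∑ h i / (1 + λ h i) = 0`. -/
theorem empirical_likelihood_lagrange (n : ℕ) (hn : 0 < n) (h : Fin n → ℝ)
    (hne : ∃ i j, h i ≠ h j)
    (hneg : ∃ i, h i < 0) (hpos : ∃ i, 0 < h i) :
    ∃ p : Fin n → ℝ,
      (∀ i, 0 ≤ p i) ∧ (∑ i, p i = 1) ∧ (∑ i, p i * h i = 0) ∧
      (∀ q : Fin n → ℝ, (∀ i, 0 ≤ q i) → (∑ i, q i = 1) → (∑ i, q i * h i = 0) →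
        ∏ i, q i ≤ ∏ i, p i) ∧
      ∃ lam : ℝ, (∀ i, p i = (1 / n) * (1 / (1 + lam * h i))) ∧
        (∑ i, h i / (1 + lam * h i) = 0) :=
  empirical_likelihood_lagrange_general n h hneg hpos
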